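/- arXiv:1810.06257 — 3 statements merged into one kernel-verified Lean document; each statement's English description precedes it below -/
import Mathlib

section
/- If P is an almost product structure (P² = I) and Ψ = (α/2)I + (√(α²+4β)/2)P is the associated metallic structure, then the Nijenhuis tensors satisfy N_P(X,Y) = (4/(α²+4β)) N_Ψ(X,Y) for all vector fields X, Y. -/
set_option maxHeartbeats 1000000


/-- Nijenhuis tensor of a (1,1)-tensor field `F` (an `ℝ`-linear endomorphism of the Lie
algebra of vector fields): `N_F(X,Y) = [FX,FY] - F[FX,Y] - F[X,FY] + F²[X,Y]`. -/
def nijenhuis {L : Type*} [LieRing L] [LieAlgebra ℝ L]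
    (F : Module.End ℝ L) (X Y : L) : L :=
  ⁅F X, F Y⁆ - F ⁅F X, Y⁆ - F ⁅X, F Y⁆ + F (F ⁅X, Y⁆)

/-- If `P² = I` and `Ψ = (α/2)I + (√(α²+4β)/2)P`, then
`N_P(X,Y) = (4/(α²+4β)) N_Ψ(X,Y)` for all vector fields `X, Y`. -/
theorem nijenhuis_product_metallic
    {L : Type*} [LieRing L] [LieAlgebra ℝ L]
    (α β : ℝ) (hα : 0 < α) (hβ : 0 < β)
    (P : Module.End ℝ L) (hP : P * P = 1)
    (Ψ : Module.End ℝ L)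
    (hΨ : Ψ = (α / 2) • (1 : Module.End ℝ L) + (Real.sqrt (α ^ 2 + 4 * β) / 2) • P) :
    ∀ X Y : L, nijenhuis P X Y = (4 / (α ^ 2 + 4 * β)) • nijenhuis Ψ X Y := by
  intro X Y
  have hpos : (0:ℝ) < α ^ 2 + 4 * β := by positivity
  have hs2 : Real.sqrt (α ^ 2 + 4 * β) * Real.sqrt (α ^ 2 + 4 * β) = α ^ 2 + 4 * β :=
    Real.mul_self_sqrt hpos.le
  have hPP : ∀ z : L, P (P z) = z := by
    intro z
    have := congrArg (fun f : Module.End ℝ L => f z) hP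
    simpa [Module.End.mul_apply] using this
  set s := Real.sqrt (α ^ 2 + 4 * β) with hs
  simp only [nijenhuis, hΨ, LinearMap.add_apply, LinearMap.smul_apply, Module.End.one_apply,
    lie_add, add_lie, lie_smul, smul_lie, map_add, map_smul, hPP, smul_add, smul_sub, smul_smul]
  match_scalars <;> field_simp <;> nlinarith [hs2, hpos]
end

section
/- Let Ψ be a metallic structure (Ψ² = αΨ + βI) with associated projector s = (σI - Ψ)/√(α²+4β), σ = (α+√(α²+4β))/2, and r = I - s. Then for all vector fields X, Y: (1/(α²+4β))·r∘N_Ψ(sX, sY) = r[sX, sY], where N_Ψ is the Nijenhuis tensor of Ψ. -/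
/-- For a metallic structure `Ψ` with projectors `s = (σI - Ψ)/√(α²+4β)`, `r = I - s`:
`(1/(α²+4β))·r(N_Ψ(sX, sY)) = r[sX, sY]` for all vector fields `X, Y`. -/
theorem metallic_integrability_s
    {L : Type*} [LieRing L] [LieAlgebra ℝ L]
    (α β : ℝ) (hα : 0 < α) (hβ : 0 < β)
    (Ψ : Module.End ℝ L)
    (hΨ : Ψ * Ψ = α • Ψ + β • (1 : Module.End ℝ L))
    (σ : ℝ) (hσ : σ = (α + Real.sqrt (α ^ 2 + 4 * β)) / 2)
    (s r : Module.End ℝ L)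
    (hs : s = (Real.sqrt (α ^ 2 + 4 * β))⁻¹ • (σ • (1 : Module.End ℝ L) - Ψ))
    (hr : r = 1 - s) :
    ∀ X Y : L,
      (1 / (α ^ 2 + 4 * β)) • r (nijenhuis Ψ (s X) (s Y)) = r ⁅s X, s Y⁆ := by
  intro X Y
  have hΔ : (0:ℝ) < α ^ 2 + 4 * β := by positivity
  set d := Real.sqrt (α ^ 2 + 4 * β) with hd
  have hd2 : d ^ 2 = α ^ 2 + 4 * β := Real.sq_sqrt hΔ.le
  have hdpos : 0 < d := Real.sqrt_pos.mpr hΔ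
  -- σ² = ασ + β
  have hσ2 : σ ^ 2 = α * σ + β := by
    rw [hσ]; field_simp; nlinarith [hd2]
  have hβ' : β = -((α - σ) * σ) := by nlinarith [hσ2]
  -- s ∘ Ψ = (α - σ) • s
  have hsΨ : s * Ψ = (α - σ) • s := by
    rw [hs, smul_mul_assoc, smul_comm]
    congr 1
    rw [sub_mul, smul_mul_assoc, one_mul, hΨ, hβ']
    module
  -- d • s = σ • 1 - Ψ
  have hds : d • s = σ • (1 : Module.End ℝ L) - Ψ := by
    rw [hs, smul_smul, mul_inv_cancel₀ hdpos.ne', one_smul]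
  have hΨeq : Ψ = σ • (1 : Module.End ℝ L) - d • s := by rw [hds]; abel
  have h2σ : d = 2 * σ - α := by rw [hσ]; ring
  -- r ∘ Ψ = σ • r
  have hrΨ : r * Ψ = σ • r := by
    rw [hr, sub_mul, one_mul, hsΨ, hΨeq, h2σ]
    module
  have hrΨp : ∀ w, r (Ψ w) = σ • r w := fun w => by
    have := LinearMap.congr_fun hrΨ w
    simpa using this
  -- Ψ (s w) = (α - σ) • s w
  have hΨsp : ∀ w, Ψ (s w) = (α - σ) • s w := fun w => by
    have h : Ψ * s = (α - σ) • s := by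
      rw [hs, mul_smul_comm, smul_comm]
      congr 1
      rw [mul_sub, mul_smul_comm, mul_one, hΨ, hβ']
      module
    have := LinearMap.congr_fun h w
    simpa using this
  rw [nijenhuis, hΨsp X, hΨsp Y]
  simp only [smul_lie, lie_smul, map_smul, map_add, map_sub, hrΨp, smul_smul]
  have hsq : (α - 2 * σ) ^ 2 = α ^ 2 + 4 * β := by
    rw [hσ]; rw [show α - 2 * ((α + d) / 2) = -d by ring]
    rw [neg_pow]; simp [hd2]
  match_scalars
  field_simp
  linear_combination hsq
end

section
/- Let Ψ be a metallic structure with projectors r, s as above. Then for all vector fields X, Y: (1/(α²+4β))·s∘N_Ψ(rX, rY) = s[rX, rY]. In particular, the distribution R = im(r) is integrable (i.e., s[rX,rY] = 0 for all X,Y) if and only if s∘N_Ψ(rX,rY) = 0 for all X, Y. -/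
/-- For a metallic structure `Ψ` with projectors `r = (Ψ - (α-σ)I)/√(α²+4β)`, `s = I - r`:
`(1/(α²+4β))·s(N_Ψ(rX, rY)) = s[rX, rY]`; in particular the distribution `R = im r` is
integrable (`s[rX,rY] = 0` for all `X, Y`) iff `s(N_Ψ(rX,rY)) = 0` for all `X, Y`. -/
theorem metallic_integrability_r
    {L : Type*} [LieRing L] [LieAlgebra ℝ L]
    (α β : ℝ) (hα : 0 < α) (hβ : 0 < β)
    (Ψ : Module.End ℝ L)
    (hΨ : Ψ * Ψ = α • Ψ + β • (1 : Module.End ℝ L))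
    (σ : ℝ) (hσ : σ = (α + Real.sqrt (α ^ 2 + 4 * β)) / 2)
    (r s : Module.End ℝ L)
    (hr : r = (Real.sqrt (α ^ 2 + 4 * β))⁻¹ • (Ψ - (α - σ) • (1 : Module.End ℝ L)))
    (hs : s = 1 - r) :
    (∀ X Y : L,
      (1 / (α ^ 2 + 4 * β)) • s (nijenhuis Ψ (r X) (r Y)) = s ⁅r X, r Y⁆) ∧
    ((∀ X Y : L, s ⁅r X, r Y⁆ = 0) ↔ (∀ X Y : L, s (nijenhuis Ψ (r X) (r Y)) = 0)) := by
  have hn4 : (0:ℝ) < α ^ 2 + 4 * β := by positivity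
  set n := Real.sqrt (α ^ 2 + 4 * β) with hn_def
  have hnpos : 0 < n := Real.sqrt_pos.mpr hn4
  have hn2 : n ^ 2 = α ^ 2 + 4 * β := Real.sq_sqrt hn4.le
  have h2σ : 2 * σ - α = n := by rw [hσ]; ring
  have hσ2 : σ ^ 2 = α * σ + β := by nlinarith [hn2, h2σ]
  have hnr : n • r = Ψ - (α - σ) • (1 : Module.End ℝ L) := by
    rw [hr, smul_smul, mul_inv_cancel₀ hnpos.ne', one_smul]
  have hΨeq : Ψ = n • r + (α - σ) • (1 : Module.End ℝ L) := by
    rw [hnr]; abel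
  have hr2 : Ψ * r = σ • r := by
    have h := congrArg (fun A => Ψ * A) hnr
    simp only [mul_smul_comm, mul_sub, mul_one, hΨ] at h
    -- h : n • (Ψ * r) = α • Ψ + β • 1 - (α - σ) • Ψ
    have : n • (Ψ * r) = n • (σ • r) := by
      rw [h, hΨeq]
      match_scalars <;> nlinarith [hσ2, h2σ]
    exact smul_right_injective _ hnpos.ne' this
  have hrΨ : r * Ψ = σ • r := by
    have comm : r * Ψ = Ψ * r := by
      rw [hr]
      simp only [smul_mul_assoc, mul_smul_comm, sub_mul, mul_sub, one_mul, mul_one]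
    rw [comm, hr2]
  have hsΨ : s * Ψ = (α - σ) • s := by
    rw [hs, sub_mul, one_mul, hrΨ, hΨeq]
    match_scalars <;> nlinarith [h2σ]
  -- pointwise versions
  have hΨrX : ∀ X : L, Ψ (r X) = σ • r X := fun X => by
    have := DFunLike.congr_fun hr2 X
    simpa [Module.End.mul_apply] using this
  have hsΨX : ∀ X : L, s (Ψ X) = (α - σ) • s X := fun X => by
    have := DFunLike.congr_fun hsΨ X
    simpa [Module.End.mul_apply] using this
  have key : ∀ X Y : L, s (nijenhuis Ψ (r X) (r Y)) = (α ^ 2 + 4 * β) • s ⁅r X, r Y⁆ := by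
    intro X Y
    have : s (nijenhuis Ψ (r X) (r Y)) = (2 * σ - α) ^ 2 • s ⁅r X, r Y⁆ := by
      simp only [nijenhuis, hΨrX, smul_lie, lie_smul, map_sub, map_add, map_smul, hsΨX,
        smul_smul]
      match_scalars
      ring
    rw [this, h2σ, hn2]
  refine ⟨fun X Y => ?_, ⟨fun h X Y => by rw [key, h X Y, smul_zero], fun h X Y => ?_⟩⟩
  · rw [key, smul_smul, one_div, inv_mul_cancel₀ hn4.ne', one_smul]
  · have h0 := h X Y
    rw [key] at h0
    rcases smul_eq_zero.mp h0 with h1 | h1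
    · exact absurd h1 hn4.ne'
    · exact h1
end
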